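/- Let P be a hereditary graph class, let G be a finite graph, and let U be a set of vertices of G such that no forbidden set of G contains any vertex of U. Then a set S ⊆ V(G) is a maximal P set of G if and only if U ⊆ S and S \ U is a maximal P set of the graph G − U. -/

import Mathlib

attribute [local instance] Classical.propDecidable

/-- A *graph class*: a collection of finite simple graphs, given as a property of
simple graphs over every finite vertex type. -/
abbrev GraphClass : Type 1 :=
  ∀ (V : Type) [Fintype V], SimpleGraph V → Prop

/-- The graph class is a nonempty collection of graphs. -/
def GraphClass.NonemptyClass (P : GraphClass) : Prop :=
  ∃ (V : Type) (_ : Fintype V) (G : SimpleGraph V), P V G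

/-- The graph class is closed under isomorphism. -/
def GraphClass.IsoClosed (P : GraphClass) : Prop :=
  ∀ (V W : Type) (_ : Fintype V) (_ : Fintype W) (G : SimpleGraph V) (H : SimpleGraph W),
    _root_.Nonempty (G ≃g H) → (P V G ↔ P W H)

/-- The graph class is hereditary: it is closed under taking induced subgraphs. -/
def GraphClass.Hereditary (P : GraphClass) : Prop :=
  ∀ (V : Type) (_ : Fintype V) (G : SimpleGraph V) (S : Set V),
    P V G → P (↥S) (G.induce S)

variable {V : Type} [Fintype V]

/-- `S ⊆ V(G)` is a `P` set of `G` if the induced subgraph `G[S]` belongs to `P`. -/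
def IsPSet (P : GraphClass) (G : SimpleGraph V) (S : Set V) : Prop :=
  P (↥S) (G.induce S)

/-- `S` is a maximal `P` set of `G`: a `P` set with no proper superset that is a `P` set. -/
def IsMaxPSet (P : GraphClass) (G : SimpleGraph V) (S : Set V) : Prop :=
  IsPSet P G S ∧ ∀ T : Set V, S ⊂ T → ¬ IsPSet P G T

/-- `S` is a connected `P` set of `G`: a `P` set inducing a connected subgraph. -/
def IsConnPSet (P : GraphClass) (G : SimpleGraph V) (S : Set V) : Prop :=
  IsPSet P G S ∧ (G.induce S).Connected

/-- `S` is a maximal connected `P` set of `G`: a connected `P` set contained in no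
strictly larger connected `P` set. -/
def IsMaxConnPSet (P : GraphClass) (G : SimpleGraph V) (S : Set V) : Prop :=
  IsConnPSet P G S ∧ ∀ T : Set V, S ⊂ T → ¬ IsConnPSet P G T

/-- A forbidden set of `G` (with respect to the class `P`): an inclusion-minimal vertex
set inducing a subgraph that is not in `P`. -/
def IsForbiddenSet (P : GraphClass) (G : SimpleGraph V) (X : Set V) : Prop :=
  ¬ IsPSet P G X ∧ ∀ Y : Set V, Y ⊂ X → IsPSet P G Y

/-!
A vertex lying in no forbidden set never decides membership in `P`: if `T` is not a `P` set,
a minimal non-`P` subset of `T` is a forbidden set, hence avoids `U` and already lies in `T \ U`.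
So `T` is a `P` set of `G` exactly when `T \ U` is a `P` set of `G − U`. Under this
correspondence every maximal `P` set of `G` absorbs `U`, and the maximal ones on both sides match.
-/

namespace SimpleGraph

def induceInduceIso (G : SimpleGraph V) {T X : Set V} (hXT : X ⊆ T) :
    (G.induce T).induce (Subtype.val ⁻¹' X) ≃g G.induce X where
  toFun a := ⟨a.1.1, a.2⟩
  invFun a := ⟨⟨a.1, hXT a.2⟩, a.2⟩
  map_rel_iff' := Iff.rfl

end SimpleGraph

namespace Set

variable {α : Type*}

theorem preimage_val_union_of_compl (T U : Set α) :
    (Subtype.val ⁻¹' (T ∪ U) : Set ↥Uᶜ) = Subtype.val ⁻¹' T := by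
  ext x; simp

theorem preimage_val_sdiff_of_compl (T U : Set α) :
    (Subtype.val ⁻¹' (T \ U) : Set ↥Uᶜ) = Subtype.val ⁻¹' T := by
  rw [preimage_sdiff, Subtype.preimage_coe_compl', sdiff_empty]

theorem maximal_preimage_val_iff {U S : Set α} {p : Set ↥Uᶜ → Prop} :
    Maximal (fun T => p (Subtype.val ⁻¹' T)) S ↔ U ⊆ S ∧ Maximal p (Subtype.val ⁻¹' S) := by
  constructor
  · intro hS
    have hUS : U ⊆ S := fun u hu =>
      hS.2 (by simpa only [preimage_val_union_of_compl] using hS.1) subset_union_left (Or.inr hu)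
    refine ⟨hUS, hS.1, fun B hB hSB => ?_⟩
    have hlift : Subtype.val ⁻¹' (Subtype.val '' B ∪ U) = B := by
      rw [preimage_val_union_of_compl, preimage_image_eq B Subtype.val_injective]
    have hS_le : S ⊆ Subtype.val '' B ∪ U := fun x hx =>
      if hxU : x ∈ U then Or.inr hxU else Or.inl ⟨⟨x, hxU⟩, hSB hx, rfl⟩
    calc B = Subtype.val ⁻¹' (Subtype.val '' B ∪ U) := hlift.symm
      _ ⊆ Subtype.val ⁻¹' S := preimage_mono (hS.2 (by simpa only [hlift] using hB) hS_le)
  · rintro ⟨hUS, hS, hmax⟩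
    refine ⟨hS, fun T hT hST x hxT => ?_⟩
    by_cases hxU : x ∈ U
    · exact hUS hxU
    · have hxT' : (⟨x, hxU⟩ : ↥Uᶜ) ∈ Subtype.val ⁻¹' T := hxT
      exact hmax hT (preimage_mono hST) hxT'

end Set

section PSets

variable {P : GraphClass} {G : SimpleGraph V}

theorem isMaxPSet_iff_maximal {S : Set V} : IsMaxPSet P G S ↔ Maximal (IsPSet P G) S :=
  maximal_iff_forall_gt.symm

theorem isForbiddenSet_iff_minimal {X : Set V} :
    IsForbiddenSet P G X ↔ Minimal (fun Y => ¬ IsPSet P G Y) X := by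
  rw [minimal_iff_forall_lt]
  simp only [IsForbiddenSet, not_not]

theorem exists_isForbiddenSet_subset {X : Set V} (hX : ¬ IsPSet P G X) :
    ∃ Y ⊆ X, IsForbiddenSet P G Y := by
  simpa only [isForbiddenSet_iff_minimal] using exists_minimal_le_of_wellFoundedLT _ X hX

theorem IsPSet.mono (hiso : P.IsoClosed) (hher : P.Hereditary) {T X : Set V}
    (hT : IsPSet P G T) (hXT : X ⊆ T) : IsPSet P G X :=
  (hiso _ _ _ _ _ _ ⟨G.induceInduceIso hXT⟩).mp (hher _ _ _ _ hT)

theorem isPSet_induce_preimage_iff (hiso : P.IsoClosed) {T W : Set V} [Fintype W]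
    (hTW : T ⊆ W) :
    IsPSet P (G.induce W) (Subtype.val ⁻¹' T) ↔ IsPSet P G T :=
  hiso _ _ _ _ _ _ ⟨G.induceInduceIso hTW⟩

theorem isPSet_diff_iff (hiso : P.IsoClosed) (hher : P.Hereditary) {U : Set V}
    (hU : ∀ X : Set V, IsForbiddenSet P G X → ∀ u ∈ U, u ∉ X) {T : Set V} :
    IsPSet P G (T \ U) ↔ IsPSet P G T := by
  refine ⟨fun hTU => ?_, fun hT => hT.mono hiso hher Set.sdiff_subset⟩
  by_contra hT
  obtain ⟨X, hXT, hX⟩ := exists_isForbiddenSet_subset hT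
  have hXTU : X ⊆ T \ U := fun x hx => ⟨hXT hx, fun hu => hU X hX x hu hx⟩
  exact hX.1 (hTU.mono hiso hher hXTU)

theorem isPSet_iff_induce_compl (hiso : P.IsoClosed) (hher : P.Hereditary) {U : Set V}
    (hU : ∀ X : Set V, IsForbiddenSet P G X → ∀ u ∈ U, u ∉ X) (T : Set V) :
    IsPSet P G T ↔ IsPSet P (G.induce Uᶜ) (Subtype.val ⁻¹' T) := by
  rw [← isPSet_diff_iff hiso hher hU,
    ← isPSet_induce_preimage_iff hiso (Set.sdiff_subset_compl T U),
    Set.preimage_val_sdiff_of_compl]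

end PSets

theorem maxPSet_iff_of_unforbidden_vertices_general
    (P : GraphClass) (hiso : P.IsoClosed) (hher : P.Hereditary)
    {V : Type} [Fintype V] (G : SimpleGraph V) (U : Set V)
    (hU : ∀ X : Set V, IsForbiddenSet P G X → ∀ u ∈ U, u ∉ X) (S : Set V) :
    IsMaxPSet P G S ↔
      U ⊆ S ∧ IsMaxPSet P (G.induce (Uᶜ)) (Subtype.val ⁻¹' (S \ U)) := by
  have hPSet : IsPSet P G = fun T => IsPSet P (G.induce Uᶜ) (Subtype.val ⁻¹' T) :=
    funext fun T => propext (isPSet_iff_induce_compl hiso hher hU T)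
  rw [isMaxPSet_iff_maximal, isMaxPSet_iff_maximal, hPSet, Set.maximal_preimage_val_iff,
    Set.preimage_val_sdiff_of_compl]

/-- Let `P` be a hereditary graph class, `G` a finite graph, and `U` a
set of vertices of `G` no vertex of which is contained in any forbidden set of `G`.
Then `S ⊆ V(G)` is a maximal `P` set of `G` if and only if `U ⊆ S` and `S \ U` is a
maximal `P` set of `G − U`. -/
theorem maxPSet_iff_of_unforbidden_vertices
    (P : GraphClass) (hne : P.NonemptyClass) (hiso : P.IsoClosed) (hher : P.Hereditary)
    {V : Type} [Fintype V] (G : SimpleGraph V) (U : Set V)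
    (hU : ∀ X : Set V, IsForbiddenSet P G X → ∀ u ∈ U, u ∉ X) (S : Set V) :
    IsMaxPSet P G S ↔
      U ⊆ S ∧ IsMaxPSet P (G.induce (Uᶜ)) (Subtype.val ⁻¹' (S \ U)) :=
  maxPSet_iff_of_unforbidden_vertices_general P hiso hher G U hU S
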